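/- arXiv:2212.06806 — 3 statements merged into one kernel-verified Lean document; each statement's English description precedes it below -/
import Mathlib

section
/- Let X be a nonnegative integer-valued random variable. Then for every k ∈ ℕ and every real R ≥ 2k, E[ X^k · 1_{X ≥ R} ] ≤ E[(X)_k] · exp( k²/(2R) + k³/(3R²) ), where (X)_k = X(X−1)⋯(X−k+1) is the falling factorial. -/
/-!
For `R ≤ n` each factor of `n^k = ∏_{i<k} n` is compared with the matching factor `n - i` of the
falling factorial: since `2i ≤ n`, the elementary bound `1 ≤ (1 - x) e^{x + x²}` on `[0, 1/2]`,
taken at `x = i/n ≤ i/R`, gives `n ≤ (n - i) e^{i/R + i²/R²}`. Multiplying over `i < k` and using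
`∑_{i<k} i^p ≤ k^{p+1}/(p+1)` yields `n^k ≤ (n)_k e^{k²/(2R) + k³/(3R²)}` pointwise on `{X ≥ R}`;
integrating gives the claim.
-/

open MeasureTheory Finset
open scoped ENNReal

theorem sum_range_pow_le_div (p k : ℕ) :
    ∑ i ∈ range k, (i : ℝ) ^ p ≤ (k : ℝ) ^ (p + 1) / (p + 1) := by
  have hmono : MonotoneOn (fun x : ℝ => x ^ p) (Set.Icc 0 (0 + k)) := fun x hx _ _ hxy =>
    pow_le_pow_left₀ hx.1 hxy p
  simpa [integral_pow] using hmono.sum_le_integral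

theorem one_le_one_sub_mul_exp_add_sq {x : ℝ} (hx₀ : 0 ≤ x) (hx : x ≤ 1 / 2) :
    1 ≤ (1 - x) * Real.exp (x + x ^ 2) := by
  have hquad := Real.quadratic_le_exp_of_nonneg (x := x + x ^ 2) (by positivity)
  have hpoly : 1 ≤ (1 - x) * (1 + (x + x ^ 2) + (x + x ^ 2) ^ 2 / 2) := by nlinarith
  nlinarith

theorem le_sub_mul_exp_div_add_sq {n R i : ℝ} (hR : 0 < R) (hRn : R ≤ n) (hi : 0 ≤ i)
    (hin : 2 * i ≤ n) : n ≤ (n - i) * Real.exp (i / R + (i / R) ^ 2) := by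
  have hn : 0 < n := hR.trans_le hRn
  have hfactor : 1 ≤ (1 - i / n) * Real.exp (i / n + (i / n) ^ 2) :=
    one_le_one_sub_mul_exp_add_sq (by positivity) (by rw [div_le_iff₀ hn]; linarith)
  calc n = n * 1 := (mul_one n).symm
    _ ≤ n * ((1 - i / n) * Real.exp (i / n + (i / n) ^ 2)) := by gcongr
    _ = (n - i) * Real.exp (i / n + (i / n) ^ 2) := by field_simp
    _ ≤ (n - i) * Real.exp (i / R + (i / R) ^ 2) := by gcongr; linarith

theorem pow_le_descFactorial_mul_exp_sum {n k : ℕ} {R : ℝ} (hkR : 2 * (k : ℝ) ≤ R)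
    (hRn : R ≤ n) :
    (n : ℝ) ^ k ≤
      n.descFactorial k * Real.exp (∑ i ∈ range k, ((i : ℝ) / R + ((i : ℝ) / R) ^ 2)) := by
  rw [Real.exp_sum, Nat.descFactorial_eq_prod_range, Nat.cast_prod, ← prod_mul_distrib]
  calc (n : ℝ) ^ k = ∏ _i ∈ range k, (n : ℝ) := by rw [prod_const, card_range]
    _ ≤ _ := prod_le_prod (fun _ _ => by positivity) fun i hi => ?_
  have hik : (i : ℝ) + 1 ≤ k := by exact_mod_cast mem_range.mp hi
  have hin : i ≤ n := by exact_mod_cast (show (i : ℝ) ≤ n by linarith)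
  rw [Nat.cast_sub hin]
  exact le_sub_mul_exp_div_add_sq (by linarith) hRn (Nat.cast_nonneg i) (by linarith)

theorem sum_range_div_add_sq_le {R : ℝ} (hR : 0 < R) (k : ℕ) :
    ∑ i ∈ range k, ((i : ℝ) / R + ((i : ℝ) / R) ^ 2) ≤
      (k : ℝ) ^ 2 / (2 * R) + (k : ℝ) ^ 3 / (3 * R ^ 2) := by
  have hid := sum_range_pow_le_div 1 k
  have hsq := sum_range_pow_le_div 2 k
  norm_num at hid hsq
  simp_rw [div_pow]
  rw [sum_add_distrib, ← sum_div, ← sum_div, ← div_div, ← div_div]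
  gcongr

theorem pow_le_descFactorial_mul_exp {n k : ℕ} {R : ℝ} (hkR : 2 * (k : ℝ) ≤ R) (hRn : R ≤ n) :
    (n : ℝ) ^ k ≤
      n.descFactorial k * Real.exp ((k : ℝ) ^ 2 / (2 * R) + (k : ℝ) ^ 3 / (3 * R ^ 2)) := by
  rcases k.eq_zero_or_pos with rfl | hk
  · simp
  have hR : 0 < R := by
    have : (1 : ℝ) ≤ k := by exact_mod_cast hk
    linarith
  refine (pow_le_descFactorial_mul_exp_sum hkR hRn).trans ?_
  gcongr
  exact sum_range_div_add_sq_le hR k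

theorem truncated_poly_moment_le_descFactorial_moment_general
    {Ω : Type} [MeasurableSpace Ω] (P : Measure Ω)
    (X : Ω → ℕ) (k : ℕ) (R : ℝ) (hR : 2 * (k : ℝ) ≤ R) :
    ∫⁻ ω, (if R ≤ (X ω : ℝ) then ((X ω : ℝ≥0∞)) ^ k else 0) ∂P ≤
      (∫⁻ ω, ((X ω).descFactorial k : ℝ≥0∞) ∂P) *
        ENNReal.ofReal (Real.exp ((k : ℝ) ^ 2 / (2 * R) + (k : ℝ) ^ 3 / (3 * R ^ 2))) := by
  rw [← lintegral_mul_const' _ _ ENNReal.ofReal_ne_top]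
  refine lintegral_mono fun ω => ?_
  split_ifs with hRX
  · rw [← ENNReal.ofReal_natCast (X ω), ← ENNReal.ofReal_pow (Nat.cast_nonneg _),
      ← ENNReal.ofReal_natCast ((X ω).descFactorial k), ← ENNReal.ofReal_mul (Nat.cast_nonneg _)]
    exact ENNReal.ofReal_le_ofReal (pow_le_descFactorial_mul_exp hR hRX)
  · exact zero_le

/-- Lemma: for a nonnegative integer-valued random variable `X`, any `k ∈ ℕ` and real
`R ≥ 2k`, one has `E[X^k 1_{X ≥ R}] ≤ E[(X)_k] · exp(k²/(2R) + k³/(3R²))`, where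
`(X)_k` is the falling factorial `X(X-1)⋯(X-k+1)` (`Nat.descFactorial`). Expectations
are interpreted in `[0,∞]` via `∫⁻`. -/
theorem truncated_poly_moment_le_descFactorial_moment
    {Ω : Type} [MeasurableSpace Ω] (P : Measure Ω) [IsProbabilityMeasure P]
    (X : Ω → ℕ) (hX : Measurable X) (k : ℕ) (hk : 1 ≤ k) (R : ℝ) (hR : 2 * (k : ℝ) ≤ R) :
    ∫⁻ ω, (if R ≤ (X ω : ℝ) then ((X ω : ℝ≥0∞)) ^ k else 0) ∂P ≤
      (∫⁻ ω, ((X ω).descFactorial k : ℝ≥0∞) ∂P) *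
        ENNReal.ofReal (Real.exp ((k : ℝ) ^ 2 / (2 * R) + (k : ℝ) ^ 3 / (3 * R ^ 2))) :=
  truncated_poly_moment_le_descFactorial_moment_general P X k R hR
end

section
/- Let X be a nonnegative integer-valued random variable. Then for every k ∈ ℕ and every real R > 0, E[X^k] ≥ ( E[(X)_k] − E[X^{2k}]^{1/2}·P(X > R)^{1/2} )·exp( k(k−1)/(2R) ), where (X)_k = X(X−1)⋯(X−k+1) is the falling factorial. -/
/-!
On `{X ≤ R}` every nonzero factor of `(X)_k = ∏_{i<k} (X - i)` satisfies
`X - i = X (1 - i/X) ≤ X (1 - i/R) ≤ X e^{-i/R}`, so `(X)_k ≤ X^k e^{-k(k-1)/(2R)}` there.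
On `{X > R}` we only use `(X)_k ≤ X^k` and Cauchy–Schwarz,
`E[X^k; X > R] ≤ E[X^{2k}]^{1/2} P(X > R)^{1/2}`.
-/

open MeasureTheory Finset Real

theorem Finset.sum_range_natCast_id (k : ℕ) :
    ∑ i ∈ range k, (i : ℝ) = k * (k - 1) / 2 := by
  induction k with
  | zero => simp
  | succ k ih => rw [sum_range_succ, ih]; push_cast; ring

theorem Nat.cast_descFactorial_le_pow (n k : ℕ) : (n.descFactorial k : ℝ) ≤ (n : ℝ) ^ k := by
  exact_mod_cast n.descFactorial_le_pow k

theorem Nat.cast_sub_le_mul_exp_neg_div {n i : ℕ} {R : ℝ} (hn : (n : ℝ) ≤ R) :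
    ((n - i : ℕ) : ℝ) ≤ n * exp (-(i / R)) := by
  rcases lt_or_ge i n with hin | hni
  · have hn0 : (0 : ℝ) < n := by exact_mod_cast i.zero_le.trans_lt hin
    have hiR : (i : ℝ) / R ≤ i / n := div_le_div_of_nonneg_left i.cast_nonneg hn0 hn
    calc ((n - i : ℕ) : ℝ) = n * (1 - i / n) := by
          rw [Nat.cast_sub hin.le]; field_simp
      _ ≤ n * (-(i / R) + 1) := by gcongr; linarith
      _ ≤ n * exp (-(i / R)) := by gcongr; exact add_one_le_exp _
  · rw [Nat.sub_eq_zero_of_le hni, Nat.cast_zero]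
    positivity

theorem Nat.descFactorial_mul_exp_le_pow {n k : ℕ} {R : ℝ} (hn : (n : ℝ) ≤ R) :
    (n.descFactorial k : ℝ) * exp (k * (k - 1) / (2 * R)) ≤ n ^ k := by
  have hprod : (n.descFactorial k : ℝ) ≤ n ^ k * exp (-(k * (k - 1) / (2 * R))) :=
    calc (n.descFactorial k : ℝ) = ∏ i ∈ range k, ((n - i : ℕ) : ℝ) := by
          rw [Nat.descFactorial_eq_prod_range, Nat.cast_prod]
      _ ≤ ∏ i ∈ range k, (n * exp (-(i / R))) :=
          prod_le_prod (fun _ _ => Nat.cast_nonneg _) fun _ _ => Nat.cast_sub_le_mul_exp_neg_div hn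
      _ = n ^ k * exp (-(k * (k - 1) / (2 * R))) := by
          rw [prod_mul_distrib, prod_const, card_range, ← exp_sum, sum_neg_distrib, ← sum_div,
            sum_range_natCast_id, div_div]
  calc (n.descFactorial k : ℝ) * exp (k * (k - 1) / (2 * R))
      ≤ n ^ k * exp (-(k * (k - 1) / (2 * R))) * exp (k * (k - 1) / (2 * R)) := by gcongr
    _ = n ^ k := by rw [mul_assoc, ← exp_add, neg_add_cancel, exp_zero, mul_one]

theorem MeasureTheory.setIntegral_le_sqrt_integral_sq_mul_sqrt_measureReal {α : Type*}
    [MeasurableSpace α] {μ : Measure α} {f : α → ℝ} (hf : MemLp f 2 μ) {s : Set α}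
    (hs : μ s ≠ ⊤) :
    ∫ x in s, f x ∂μ ≤ √(∫ x, f x ^ 2 ∂μ) * √(μ.real s) := by
  have : IsFiniteMeasure (μ.restrict s) := ⟨by simpa using hs.lt_top⟩
  have hf' : MemLp f (ENNReal.ofReal 2) (μ.restrict s) := by simpa using hf.restrict s
  have hholder := integral_mul_norm_le_Lp_mul_Lq .two_two hf'
    (memLp_const (1 : ℝ) : MemLp (fun _ => (1 : ℝ)) _ _)
  simp only [norm_one, mul_one, integral_const, smul_eq_mul, Real.norm_eq_abs, rpow_two,
    ← sqrt_eq_rpow, sq_abs, one_pow, measureReal_restrict_apply_univ] at hholder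
  have hsq : ∫ x in s, f x ^ 2 ∂μ ≤ ∫ x, f x ^ 2 ∂μ :=
    setIntegral_le_integral hf.integrable_sq (.of_forall fun _ => sq_nonneg _)
  calc ∫ x in s, f x ∂μ ≤ ∫ x in s, |f x| ∂μ := (le_abs_self _).trans abs_integral_le_integral_abs
    _ ≤ √(∫ x in s, f x ^ 2 ∂μ) * √(μ.real s) := hholder
    _ ≤ √(∫ x, f x ^ 2 ∂μ) * √(μ.real s) := by gcongr

section NatValued

variable {Ω : Type*} [MeasurableSpace Ω] {μ : Measure Ω} {X : Ω → ℕ} {k : ℕ}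

theorem integrable_descFactorial_of_integrable_pow (hX : Measurable X)
    (hpow : Integrable (fun ω => (X ω : ℝ) ^ k) μ) :
    Integrable (fun ω => ((X ω).descFactorial k : ℝ)) μ :=
  hpow.mono' (by fun_prop) (.of_forall fun ω => by
    simpa using Nat.cast_descFactorial_le_pow (X ω) k)

theorem setIntegral_descFactorial_mul_exp_le_integral_pow {R : ℝ} {s : Set Ω}
    (hs : MeasurableSet s) (hsR : ∀ ω ∈ s, (X ω : ℝ) ≤ R) (hX : Measurable X)
    (hpow : Integrable (fun ω => (X ω : ℝ) ^ k) μ) :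
    (∫ ω in s, ((X ω).descFactorial k : ℝ) ∂μ) * exp (k * (k - 1) / (2 * R)) ≤
      ∫ ω, (X ω : ℝ) ^ k ∂μ :=
  calc (∫ ω in s, ((X ω).descFactorial k : ℝ) ∂μ) * exp (k * (k - 1) / (2 * R))
      = ∫ ω in s, ((X ω).descFactorial k : ℝ) * exp (k * (k - 1) / (2 * R)) ∂μ :=
        (integral_mul_const _ _).symm
    _ ≤ ∫ ω in s, (X ω : ℝ) ^ k ∂μ :=
        setIntegral_mono_on
          ((integrable_descFactorial_of_integrable_pow hX hpow).mul_const _).integrableOn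
          hpow.integrableOn hs fun ω hω => Nat.descFactorial_mul_exp_le_pow (hsR ω hω)
    _ ≤ ∫ ω, (X ω : ℝ) ^ k ∂μ := setIntegral_le_integral hpow (.of_forall fun _ => by positivity)

end NatValued

theorem poly_moment_ge_descFactorial_moment_general
    {Ω : Type} [MeasurableSpace Ω] (P : Measure Ω) [IsProbabilityMeasure P]
    (X : Ω → ℕ) (hX : Measurable X) (k : ℕ) (R : ℝ)
    (hInt : Integrable (fun ω => ((X ω : ℝ)) ^ (2 * k)) P) :
    ((∫ ω, ((X ω).descFactorial k : ℝ) ∂P) -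
        Real.sqrt (∫ ω, ((X ω : ℝ)) ^ (2 * k) ∂P) *
          Real.sqrt ((P {ω | R < (X ω : ℝ)}).toReal)) *
      Real.exp ((k : ℝ) * ((k : ℝ) - 1) / (2 * R)) ≤
    ∫ ω, ((X ω : ℝ)) ^ k ∂P := by
  set S : Set Ω := {ω | R < (X ω : ℝ)}
  have hS : MeasurableSet S := measurableSet_lt measurable_const (by fun_prop)
  have hL2 : MemLp (fun ω => (X ω : ℝ) ^ k) 2 P :=
    (memLp_two_iff_integrable_sq (by fun_prop)).2 (by simpa only [← pow_mul'] using hInt)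
  have hpow : Integrable (fun ω => (X ω : ℝ) ^ k) P := hL2.integrable one_le_two
  have hdesc := integrable_descFactorial_of_integrable_pow hX hpow
  have hlarge : ∫ ω in S, ((X ω).descFactorial k : ℝ) ∂P ≤
      √(∫ ω, (X ω : ℝ) ^ (2 * k) ∂P) * √(P.real S) :=
    calc ∫ ω in S, ((X ω).descFactorial k : ℝ) ∂P ≤ ∫ ω in S, (X ω : ℝ) ^ k ∂P :=
          setIntegral_mono hdesc.integrableOn hpow.integrableOn fun ω =>
            Nat.cast_descFactorial_le_pow (X ω) k
      _ ≤ √(∫ ω, ((X ω : ℝ) ^ k) ^ 2 ∂P) * √(P.real S) :=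
          setIntegral_le_sqrt_integral_sq_mul_sqrt_measureReal hL2 (measure_ne_top P S)
      _ = √(∫ ω, (X ω : ℝ) ^ (2 * k) ∂P) * √(P.real S) := by simp only [← pow_mul']
  have hsmall := setIntegral_descFactorial_mul_exp_le_integral_pow (R := R) hS.compl
    (fun ω hω => not_lt.1 hω) hX hpow
  rw [← integral_add_compl hS hdesc]
  calc _ ≤ (∫ ω in Sᶜ, ((X ω).descFactorial k : ℝ) ∂P) * exp (k * (k - 1) / (2 * R)) :=
        mul_le_mul_of_nonneg_right (by rw [← measureReal_def]; linarith) (exp_pos _).le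
    _ ≤ _ := hsmall

/-- Lemma: for a nonnegative integer-valued random variable `X` with `E[X^{2k}] < ∞`,
any `k ∈ ℕ` and real `R > 0`,
`E[X^k] ≥ (E[(X)_k] − E[X^{2k}]^{1/2} · P(X > R)^{1/2}) · exp(k(k−1)/(2R))`,
where `(X)_k` is the falling factorial `Nat.descFactorial X k`. -/
theorem poly_moment_ge_descFactorial_moment
    {Ω : Type} [MeasurableSpace Ω] (P : Measure Ω) [IsProbabilityMeasure P]
    (X : Ω → ℕ) (hX : Measurable X) (k : ℕ) (hk : 1 ≤ k) (R : ℝ) (hR : 0 < R)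
    (hInt : Integrable (fun ω => ((X ω : ℝ)) ^ (2 * k)) P) :
    ((∫ ω, ((X ω).descFactorial k : ℝ) ∂P) -
        Real.sqrt (∫ ω, ((X ω : ℝ)) ^ (2 * k) ∂P) *
          Real.sqrt ((P {ω | R < (X ω : ℝ)}).toReal)) *
      Real.exp ((k : ℝ) * ((k : ℝ) - 1) / (2 * R)) ≤
    ∫ ω, ((X ω : ℝ)) ^ k ∂P :=
  poly_moment_ge_descFactorial_moment_general P X hX k R hInt
end

section
/- There exist positive constants C, k0, and N0 such that for all integers N ≥ N0, all integers k with k0 ≤ k ≤ N, and all q ∈ [k^{-2}, 1), the sum S = Σ_{i=1}^{k−1} ( (i/k)·(1−i/k) )^{-1} · exp[ k·( (i/k)·log(1/q) + 2·H(i/k) + (k/N)·(1−i/k) ) ] satisfies S ≤ C·q^{-1/4}·k^{1/2}·[ (1 + q^{1/2}·exp(k/(2N)))² / q ]^k. -/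
/-!
Write `k = i + d`, `a = √q · exp (k / 2N)` and `β = q ^ (1/4)`. The `i`-th summand equals
`k² / (i d) · exp (2k H(i/k)) · q⁻ᵏ a^(2d)`, and the two-sided Stirling bounds give
`exp (2k H(i/k)) ≲ √(i d / k) · C(2k, 2d)`, so the summand is at most a constant times
`√k · q⁻ᵏ · (k / √(i d)) · C(2k, 2d) a^(2d)`. The excess factor `k / √(i d)` is absorbed by
a neighbouring term of the binomial expansion of `(1 + a)^(2k)`: for `i ≥ d` the next term is
larger by `≈ a i / d`, which beats `β k / √(i d)` by AM-GM because `β² ≤ a`; for `i < d` the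
previous term is larger by `≈ d / (a i) ≳ k / √(i d)` because `a ≤ 2`. Summing over `i`, each
of the three families of binomial terms is at most `(1 + a)^(2k)`.
-/

/-- The entropy function `H(x) = -x log x - (1-x) log (1-x)`. -/
noncomputable def entropyH (x : ℝ) : ℝ := -x * Real.log x - (1 - x) * Real.log (1 - x)

/-- The sum `S` appearing in the factorial moment formula. -/
noncomputable def ledouxSum (q : ℝ) (N k : ℕ) : ℝ :=
  ∑ i ∈ Finset.Ico 1 k,
    (((i : ℝ) / k) * (1 - (i : ℝ) / k))⁻¹ *
      Real.exp ((k : ℝ) * (((i : ℝ) / k) * Real.log q⁻¹ + 2 * entropyH ((i : ℝ) / k) +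
        ((k : ℝ) / N) * (1 - (i : ℝ) / k)))

open Real Finset
open scoped Nat

namespace Stirling

theorem factorial_le_stirling {n : ℕ} (hn : n ≠ 0) :
    (n ! : ℝ) ≤ exp 1 * √n * (n / exp 1) ^ n := by
  have hseq : stirlingSeq n ≤ exp 1 / √2 := by
    obtain ⟨m, rfl⟩ := Nat.exists_eq_succ_of_ne_zero hn
    simpa [stirlingSeq_one] using stirlingSeq'_antitone (Nat.zero_le m)
  have hfact : (n ! : ℝ) = stirlingSeq n * (√(2 * n) * (n / exp 1) ^ n) := by
    rw [stirlingSeq, div_mul_cancel₀]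
    have : (0 : ℝ) < n := by positivity
    positivity
  have hsqrt : exp 1 / √2 * √(2 * n) = exp 1 * √n := by
    rw [sqrt_mul zero_le_two]
    field_simp
  calc (n ! : ℝ) = stirlingSeq n * (√(2 * n) * (n / exp 1) ^ n) := hfact
    _ ≤ exp 1 / √2 * (√(2 * n) * (n / exp 1) ^ n) := by gcongr
    _ = exp 1 * √n * (n / exp 1) ^ n := by rw [← mul_assoc, hsqrt]

end Stirling

theorem sqrt_mul_pow_le_choose {m l : ℕ} (hm : m ≠ 0) (hl : l ≠ 0) :
    √(2 * π * (m + l)) * ((m : ℝ) + l) ^ (m + l) ≤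
      exp 1 ^ 2 * √(m * l) * ((m : ℝ) ^ m * (l : ℝ) ^ l) * (m + l).choose m := by
  have hchoose : (((m + l)! : ℕ) : ℝ) = (m + l).choose m * m ! * l ! := by
    rw [add_comm m l, ← Nat.add_choose_mul_factorial_mul_factorial l m]
    push_cast; ring
  have hstirling := Stirling.le_factorial_stirling (m + l)
  push_cast at hstirling
  calc √(2 * π * (m + l)) * ((m : ℝ) + l) ^ (m + l)
      = √(2 * π * (m + l)) * (((m : ℝ) + l) / exp 1) ^ (m + l) * exp 1 ^ (m + l) := by
        rw [div_pow]; field_simp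
    _ ≤ (m + l).choose m * m ! * l ! * exp 1 ^ (m + l) := by
        rw [← hchoose]; gcongr
    _ ≤ (m + l).choose m * (exp 1 * √m * (m / exp 1) ^ m) * (exp 1 * √l * (l / exp 1) ^ l)
          * exp 1 ^ (m + l) := by
        gcongr
        · exact Stirling.factorial_le_stirling hm
        · exact Stirling.factorial_le_stirling hl
    _ = exp 1 ^ 2 * √(m * l) * ((m : ℝ) ^ m * (l : ℝ) ^ l) * (m + l).choose m := by
        rw [sqrt_mul (Nat.cast_nonneg m), div_pow, div_pow, pow_add]
        field_simp

theorem exp_mul_entropyH_mul_pow {m l : ℕ} (hm : m ≠ 0) (hl : l ≠ 0) :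
    exp (((m : ℝ) + l) * entropyH (m / (m + l))) * ((m : ℝ) ^ m * (l : ℝ) ^ l) =
      ((m : ℝ) + l) ^ (m + l) := by
  have hcompl : 1 - (m : ℝ) / (m + l) = l / (m + l) := by field_simp; ring
  have hexponent : ((m : ℝ) + l) * entropyH (m / (m + l)) =
      m * log ((m + l) / m) + l * log ((m + l) / l) := by
    rw [entropyH, hcompl, log_div, log_div, log_div, log_div] <;> try positivity
    field_simp
    ring
  rw [hexponent, exp_add, ← log_rpow (by positivity), ← log_rpow (by positivity),
    exp_log (by positivity), exp_log (by positivity)]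
  simp only [rpow_natCast, div_pow, pow_add]
  field_simp

theorem sqrt_mul_exp_entropyH_le_choose {m l : ℕ} (hm : m ≠ 0) (hl : l ≠ 0) :
    √(2 * π * (m + l)) * exp (((m : ℝ) + l) * entropyH (m / (m + l))) ≤
      exp 1 ^ 2 * √(m * l) * (m + l).choose m := by
  have hpow : (0 : ℝ) < (m : ℝ) ^ m * (l : ℝ) ^ l := by positivity
  refine le_of_mul_le_mul_right ?_ hpow
  calc √(2 * π * (m + l)) * exp (((m : ℝ) + l) * entropyH (m / (m + l))) *
        ((m : ℝ) ^ m * (l : ℝ) ^ l)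
      = √(2 * π * (m + l)) * ((m : ℝ) + l) ^ (m + l) := by
        rw [mul_assoc, exp_mul_entropyH_mul_pow hm hl]
    _ ≤ _ := sqrt_mul_pow_le_choose hm hl
    _ = _ := by ring

noncomputable def binomTerm (n : ℕ) (a : ℝ) (j : ℕ) : ℝ := n.choose j * a ^ j

theorem binomTerm_nonneg (n : ℕ) {a : ℝ} (ha : 0 ≤ a) (j : ℕ) : 0 ≤ binomTerm n a j := by
  unfold binomTerm; positivity

theorem binomTerm_succ_mul (n : ℕ) (a : ℝ) {j : ℕ} (hj : j ≤ n) :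
    binomTerm n a (j + 1) * (j + 1) = binomTerm n a j * (n - j) * a := by
  have h : ((n.choose (j + 1) * (j + 1) : ℕ) : ℝ) = (n.choose j * (n - j) : ℕ) :=
    congrArg Nat.cast (Nat.choose_succ_right_eq n j)
  push_cast [Nat.cast_sub hj] at h
  unfold binomTerm
  linear_combination a ^ (j + 1) * h

theorem sum_binomTerm_comp_le {ι : Type*} (n : ℕ) {a : ℝ} (ha : 0 ≤ a) {s : Finset ι}
    {g : ι → ℕ} (hg : Set.InjOn g s) (hgn : ∀ x ∈ s, g x ≤ n) :
    ∑ x ∈ s, binomTerm n a (g x) ≤ (1 + a) ^ n := by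
  rw [← Finset.sum_image hg]
  calc ∑ j ∈ s.image g, binomTerm n a j
      ≤ ∑ j ∈ range (n + 1), binomTerm n a j := by
        refine Finset.sum_le_sum_of_subset_of_nonneg ?_ fun j _ _ ↦ binomTerm_nonneg n ha j
        intro j hj
        obtain ⟨x, hx, rfl⟩ := Finset.mem_image.mp hj
        exact Finset.mem_range_succ_iff.mpr (hgn x hx)
    _ = (1 + a) ^ n := by
        rw [add_comm 1 a, add_pow]
        exact Finset.sum_congr rfl fun j _ ↦ by rw [binomTerm, one_pow, mul_one, mul_comm]

theorem sum_Ico_binomTerm_neighbours_le (k : ℕ) {a : ℝ} (ha : 0 ≤ a) :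
    ∑ i ∈ Ico 1 k, (binomTerm (2 * k) a (2 * (k - i) - 1) + binomTerm (2 * k) a (2 * (k - i)) +
      binomTerm (2 * k) a (2 * (k - i) + 1)) ≤ 3 * (1 + a) ^ (2 * k) := by
  rw [sum_add_distrib, sum_add_distrib]
  have h₁ := sum_binomTerm_comp_le (2 * k) ha (s := Ico 1 k) (g := fun i ↦ 2 * (k - i) - 1)
    (fun x hx y hy h ↦ by simp only [coe_Ico, Set.mem_Ico] at hx hy h; omega)
    (fun x hx ↦ by simp only [mem_Ico] at hx; omega)
  have h₂ := sum_binomTerm_comp_le (2 * k) ha (s := Ico 1 k) (g := fun i ↦ 2 * (k - i))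
    (fun x hx y hy h ↦ by simp only [coe_Ico, Set.mem_Ico] at hx hy h; omega)
    (fun x hx ↦ by simp only [mem_Ico] at hx; omega)
  have h₃ := sum_binomTerm_comp_le (2 * k) ha (s := Ico 1 k) (g := fun i ↦ 2 * (k - i) + 1)
    (fun x hx y hy h ↦ by simp only [coe_Ico, Set.mem_Ico] at hx hy h; omega)
    (fun x hx ↦ by simp only [mem_Ico] at hx; omega)
  linarith

section Neighbours

variable {i d : ℕ} {a β : ℝ}

theorem mul_binomTerm_le_add_succ (hd : 1 ≤ d) (hdi : d ≤ i) (hβa : β ^ 2 ≤ a) :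
    β * (i + d) * binomTerm (2 * (i + d)) a (2 * d) ≤
      6 * √(i * d) *
        (binomTerm (2 * (i + d)) a (2 * d) + binomTerm (2 * (i + d)) a (2 * d + 1)) := by
  set T := binomTerm (2 * (i + d)) a
  have ha : 0 ≤ a := (sq_nonneg β).trans hβa
  have hd' : (1 : ℝ) ≤ d := by exact_mod_cast hd
  have hdi' : (d : ℝ) ≤ i := by exact_mod_cast hdi
  set s := √((i : ℝ) * d)
  have hs : 0 < s := sqrt_pos.mpr (by nlinarith)
  have hs2 : s ^ 2 = i * d := sq_sqrt (by positivity)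
  have hnext : T (2 * d + 1) * (2 * d + 1) = T (2 * d) * (2 * i) * a := by
    have := binomTerm_succ_mul (2 * (i + d)) a (j := 2 * d) (by omega)
    push_cast [Nat.cast_sub (show 2 * d ≤ 2 * (i + d) by omega)] at this
    linear_combination this
  have hamgm : 4 * s * (β * (i + d)) ≤ 4 * s ^ 2 + β ^ 2 * (i + d) ^ 2 := by
    nlinarith [sq_nonneg (2 * s - β * (i + d))]
  have hscalar : β * (i + d) * (2 * d + 1) ≤ 6 * s * (2 * d + 1 + 2 * i * a) := by
    refine le_of_mul_le_mul_left ?_ (by linarith : (0 : ℝ) < 4 * s)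
    have hsum : ((i : ℝ) + d) ^ 2 * (2 * d + 1) ≤ 4 * i ^ 2 * (3 * d) := by
      gcongr <;> nlinarith
    calc 4 * s * (β * (i + d) * (2 * d + 1))
        = 4 * s * (β * (i + d)) * (2 * d + 1) := by ring
      _ ≤ (4 * s ^ 2 + β ^ 2 * (i + d) ^ 2) * (2 * d + 1) := by gcongr
      _ ≤ (4 * s ^ 2 + a * (i + d) ^ 2) * (2 * d + 1) := by gcongr
      _ ≤ 24 * (i * d) * (2 * d + 1 + 2 * i * a) := by
          have h1 : 0 ≤ (i : ℝ) * d * (2 * d + 1) := by positivity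
          have h2 : 0 ≤ a * (i ^ 2 * d) := by positivity
          nlinarith [mul_le_mul_of_nonneg_left hsum ha]
      _ = 4 * s * (6 * s * (2 * d + 1 + 2 * i * a)) := by rw [← hs2]; ring
  refine le_of_mul_le_mul_right ?_ (by positivity : (0 : ℝ) < 2 * d + 1)
  calc β * (i + d) * T (2 * d) * (2 * d + 1)
      = β * (i + d) * (2 * d + 1) * T (2 * d) := by ring
    _ ≤ 6 * s * (2 * d + 1 + 2 * i * a) * T (2 * d) := by
        gcongr; exact binomTerm_nonneg _ ha _
    _ = 6 * s * (T (2 * d) + T (2 * d + 1)) * (2 * d + 1) := by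
        linear_combination (-6 * s) * hnext

theorem mul_binomTerm_le_pred (hi : 1 ≤ i) (hid : i < d) (hβ1 : β ≤ 1) (ha : 0 ≤ a)
    (ha2 : a ≤ 2) :
    β * (i + d) * binomTerm (2 * (i + d)) a (2 * d) ≤
      6 * √(i * d) * binomTerm (2 * (i + d)) a (2 * d - 1) := by
  set T := binomTerm (2 * (i + d)) a
  have hi' : (1 : ℝ) ≤ i := by exact_mod_cast hi
  have hid' : (i : ℝ) + 1 ≤ d := by exact_mod_cast hid
  set s := √((i : ℝ) * d)
  have hs2 : s ^ 2 = i * d := sq_sqrt (by positivity)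
  have hprev : T (2 * d) * (2 * d) = T (2 * d - 1) * (2 * i + 1) * a := by
    obtain ⟨e, rfl⟩ := Nat.exists_eq_add_of_lt hid
    have := binomTerm_succ_mul (2 * (i + (i + e + 1))) a (j := 2 * (i + e) + 1) (by omega)
    rw [show 2 * (i + e + 1) - 1 = 2 * (i + e) + 1 by omega,
      show 2 * (i + e + 1) = 2 * (i + e) + 1 + 1 by omega]
    push_cast at this ⊢
    linear_combination this
  have hsi : (i : ℝ) ≤ s := by nlinarith [sqrt_nonneg ((i : ℝ) * d)]
  have hscalar : β * (i + d) * ((2 * i + 1) * a) ≤ 6 * s * (2 * d) :=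
    calc β * (i + d) * ((2 * i + 1) * a) ≤ (2 * d) * (3 * i * 2) := by
          refine mul_le_mul ?_ ?_ (by positivity) (by positivity)
          · nlinarith
          · gcongr; linarith
      _ ≤ 6 * s * (2 * d) := by nlinarith
  refine le_of_mul_le_mul_right ?_ (by linarith : (0 : ℝ) < 2 * d)
  calc β * (i + d) * T (2 * d) * (2 * d)
      = β * (i + d) * ((2 * i + 1) * a) * T (2 * d - 1) := by
        linear_combination β * (i + d) * hprev
    _ ≤ 6 * s * (2 * d) * T (2 * d - 1) := by gcongr; exact binomTerm_nonneg _ ha _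
    _ = 6 * s * T (2 * d - 1) * (2 * d) := by ring

theorem mul_binomTerm_le (hi : 1 ≤ i) (hd : 1 ≤ d) (hβ1 : β ≤ 1) (hβa : β ^ 2 ≤ a)
    (ha2 : a ≤ 2) :
    β * (i + d) * binomTerm (2 * (i + d)) a (2 * d) ≤
      6 * √(i * d) * (binomTerm (2 * (i + d)) a (2 * d - 1) + binomTerm (2 * (i + d)) a (2 * d) +
        binomTerm (2 * (i + d)) a (2 * d + 1)) := by
  have ha : 0 ≤ a := (sq_nonneg β).trans hβa
  have hs : 0 ≤ √((i : ℝ) * d) := sqrt_nonneg _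
  have hT := binomTerm_nonneg (2 * (i + d)) ha
  rcases le_or_gt d i with hdi | hid
  · nlinarith [mul_binomTerm_le_add_succ hd hdi hβa, mul_nonneg hs (hT (2 * d - 1))]
  · nlinarith [mul_binomTerm_le_pred hi hid hβ1 ha ha2, mul_nonneg hs (hT (2 * d)),
      mul_nonneg hs (hT (2 * d + 1))]

end Neighbours

theorem sqrt_mul_exp_two_mul_entropyH_le {i d : ℕ} (hi : i ≠ 0) (hd : d ≠ 0) :
    √((i : ℝ) + d) * exp (2 * ((i : ℝ) + d) * entropyH (i / (i + d))) ≤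
      5 * √((i : ℝ) * d) * (2 * (i + d)).choose (2 * i) := by
  have h := sqrt_mul_exp_entropyH_le_choose (m := 2 * i) (l := 2 * d) (by omega) (by omega)
  have hid : (0 : ℝ) < i + d := by positivity
  have harg : ((2 * i : ℕ) : ℝ) / ((2 * i : ℕ) + (2 * d : ℕ)) = i / (i + d) := by
    push_cast; field_simp
  rw [harg, ← mul_add] at h
  push_cast at h
  have hsqrt_left : √(2 * π * (2 * i + 2 * d)) = 2 * √π * √((i : ℝ) + d) := by
    rw [show 2 * π * (2 * i + 2 * d) = 2 ^ 2 * π * ((i : ℝ) + d) by ring,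
      sqrt_mul (by positivity), sqrt_mul (by positivity), sqrt_sq zero_le_two]
  have hsqrt_right : √(2 * (i : ℝ) * (2 * d)) = 2 * √((i : ℝ) * d) := by
    rw [show 2 * (i : ℝ) * (2 * d) = 2 ^ 2 * (i * d) by ring, sqrt_mul (by positivity),
      sqrt_sq zero_le_two]
  rw [hsqrt_left, hsqrt_right, ← mul_add] at h
  have hπ : (1.7 : ℝ) ≤ √π := le_sqrt_of_sq_le (by nlinarith [pi_gt_three])
  have he : exp 1 ^ 2 ≤ 5 * √π := by nlinarith [exp_one_lt_d9, exp_pos 1]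
  refine le_of_mul_le_mul_left ?_ (by positivity : 0 < 2 * √π)
  calc 2 * √π * (√((i : ℝ) + d) * exp (2 * ((i : ℝ) + d) * entropyH (i / (i + d))))
      ≤ exp 1 ^ 2 * (2 * √((i : ℝ) * d)) * (2 * (i + d)).choose (2 * i) := by
        rw [← mul_assoc]; exact h
    _ ≤ 5 * √π * (2 * √((i : ℝ) * d)) * (2 * (i + d)).choose (2 * i) := by gcongr
    _ = 2 * √π * (5 * √((i : ℝ) * d) * (2 * (i + d)).choose (2 * i)) := by ring

noncomputable def ledouxTerm (q : ℝ) (N k i : ℕ) : ℝ :=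
  (((i : ℝ) / k) * (1 - (i : ℝ) / k))⁻¹ *
    Real.exp ((k : ℝ) * (((i : ℝ) / k) * Real.log q⁻¹ + 2 * entropyH ((i : ℝ) / k) +
      ((k : ℝ) / N) * (1 - (i : ℝ) / k)))

theorem ledouxSum_eq_sum_ledouxTerm (q : ℝ) (N k : ℕ) :
    ledouxSum q N k = ∑ i ∈ Ico 1 k, ledouxTerm q N k i := rfl

theorem ledouxTerm_eq {q : ℝ} (hq : 0 < q) (N : ℕ) {i d : ℕ} (hi : i ≠ 0) (hd : d ≠ 0) :
    ledouxTerm q N (i + d) i =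
      ((i : ℝ) + d) ^ 2 / (i * d) * exp (2 * ((i : ℝ) + d) * entropyH (i / (i + d))) *
        (q⁻¹ ^ (i + d) * (√q * exp (((i : ℝ) + d) / (2 * N))) ^ (2 * d)) := by
  have hi' : (0 : ℝ) < i := by positivity
  have hd' : (0 : ℝ) < d := by positivity
  have hcompl : 1 - (i : ℝ) / (i + d) = d / (i + d) := by field_simp; ring
  have hexponent : ((i : ℝ) + d) * ((i / (i + d)) * log q⁻¹ + 2 * entropyH (i / (i + d)) +
      ((i + d) / N) * (d / (i + d))) =
      i * log q⁻¹ + 2 * ((i : ℝ) + d) * entropyH (i / (i + d)) +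
        (2 * d : ℕ) * (((i : ℝ) + d) / (2 * N)) := by
    push_cast; field_simp
  have hpow : q⁻¹ ^ i = q⁻¹ ^ (i + d) * √q ^ (2 * d) := by
    rw [pow_mul, sq_sqrt hq.le, pow_add, mul_assoc, ← mul_pow, inv_mul_cancel₀ hq.ne', one_pow,
      mul_one]
  rw [ledouxTerm]
  push_cast
  rw [hcompl, hexponent, exp_add, exp_add, exp_nat_mul, exp_nat_mul, exp_log (inv_pos.mpr hq),
    hpow, mul_pow]
  field_simp

theorem ledouxTerm_le {q : ℝ} (hq0 : 0 < q) (hq1 : q < 1) {N k i d : ℕ} (hi : 1 ≤ i) (hd : 1 ≤ d)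
    (hk : i + d = k) (hkN : k ≤ N) :
    ledouxTerm q N k i ≤
      30 * √k * (q ^ ((1 : ℝ) / 4))⁻¹ * q⁻¹ ^ k *
        (binomTerm (2 * k) (√q * exp (k / (2 * N))) (2 * d - 1) +
          binomTerm (2 * k) (√q * exp (k / (2 * N))) (2 * d) +
          binomTerm (2 * k) (√q * exp (k / (2 * N))) (2 * d + 1)) := by
  subst hk
  push_cast
  set a := √q * exp (((i : ℝ) + d) / (2 * N))
  set β := q ^ ((1 : ℝ) / 4)
  have hN : (0 : ℝ) < N := by exact_mod_cast (show 0 < N by omega)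
  have hc : ((i : ℝ) + d) / (2 * N) ≤ 1 / 2 := by
    rw [div_le_iff₀ (by positivity)]
    have : ((i : ℝ) + d) ≤ N := by exact_mod_cast hkN
    linarith
  have hβ : 0 < β := by positivity
  have hβ1 : β ≤ 1 := rpow_le_one hq0.le hq1.le (by norm_num)
  have hβsq : β ^ 2 = √q := by
    rw [← rpow_natCast, ← rpow_mul hq0.le, sqrt_eq_rpow]; norm_num
  have hβa : β ^ 2 ≤ a := by
    rw [hβsq]; exact le_mul_of_one_le_right (sqrt_nonneg q) (one_le_exp (by positivity))
  have ha2 : a ≤ 2 := by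
    have hexp : exp (((i : ℝ) + d) / (2 * N)) ≤ 2 :=
      (exp_bound_div_one_sub_of_interval (by positivity) (by linarith)).trans
        (by rw [div_le_iff₀ (by linarith)]; linarith)
    have hsq : √q ≤ 1 := sqrt_le_one.mpr hq1.le
    nlinarith [sqrt_nonneg q, exp_pos (((i : ℝ) + d) / (2 * N))]
  set s := √((i : ℝ) * d)
  set r := √((i : ℝ) + d)
  have hs2 : s ^ 2 = i * d := sq_sqrt (by positivity)
  have hr2 : r ^ 2 = i + d := sq_sqrt (by positivity)
  have hs : 0 < s := by positivity
  have hr : 0 < r := by positivity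
  set E := exp (2 * ((i : ℝ) + d) * entropyH (i / (i + d)))
  set C : ℝ := ((2 * (i + d)).choose (2 * i) : ℝ)
  have hE : E ≤ 5 * s * C / r := by
    rw [le_div_iff₀ hr, mul_comm]
    exact sqrt_mul_exp_two_mul_entropyH_le (by omega) (by omega)
  have hC : binomTerm (2 * (i + d)) a (2 * d) = C * a ^ (2 * d) := by
    rw [binomTerm, ← Nat.choose_symm (by omega)]
    congr 3; omega
  calc ledouxTerm q N (i + d) i
      = ((i : ℝ) + d) ^ 2 / (i * d) * E * (q⁻¹ ^ (i + d) * a ^ (2 * d)) :=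
        ledouxTerm_eq hq0 N (by omega) (by omega)
    _ ≤ ((i : ℝ) + d) ^ 2 / (i * d) * (5 * s * C / r) * (q⁻¹ ^ (i + d) * a ^ (2 * d)) := by
        gcongr
    _ = 5 * (i + d) / (r * s * β) * q⁻¹ ^ (i + d) *
          (β * (i + d) * binomTerm (2 * (i + d)) a (2 * d)) := by
        rw [hC, ← hs2]; field_simp
    _ ≤ 5 * (i + d) / (r * s * β) * q⁻¹ ^ (i + d) *
          (6 * s * (binomTerm (2 * (i + d)) a (2 * d - 1) + binomTerm (2 * (i + d)) a (2 * d) +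
            binomTerm (2 * (i + d)) a (2 * d + 1))) := by
        exact mul_le_mul_of_nonneg_left (mul_binomTerm_le hi hd hβ1 hβa ha2) (by positivity)
    _ = _ := by rw [← hr2]; field_simp; ring

theorem ledoux_sum_upper_bound :
    ∃ C : ℝ, 0 < C ∧ ∃ k0 N0 : ℕ, 0 < k0 ∧ 0 < N0 ∧
      ∀ N k : ℕ, N0 ≤ N → k0 ≤ k → k ≤ N →
        ∀ q : ℝ, q ∈ Set.Ico (((k : ℝ) ^ 2)⁻¹) 1 →
          ledouxSum q N k ≤
            C * q ^ (-(1:ℝ)/4) * (k : ℝ) ^ ((1:ℝ)/2) *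
              ((1 + q ^ ((1:ℝ)/2) * Real.exp ((k : ℝ) / (2 * N))) ^ 2 / q) ^ k := by
  refine ⟨90, by norm_num, 1, 1, one_pos, one_pos, fun N k _ hk hkN q ⟨hqk, hq1⟩ ↦ ?_⟩
  have hq0 : 0 < q := lt_of_lt_of_le (by positivity) hqk
  rw [ledouxSum_eq_sum_ledouxTerm, neg_div, rpow_neg hq0.le, ← sqrt_eq_rpow, ← sqrt_eq_rpow]
  set a := √q * exp (k / (2 * N))
  set T := binomTerm (2 * k) a
  calc ∑ i ∈ Ico 1 k, ledouxTerm q N k i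
      ≤ ∑ i ∈ Ico 1 k, 30 * √k * (q ^ ((1 : ℝ) / 4))⁻¹ * q⁻¹ ^ k *
          (T (2 * (k - i) - 1) + T (2 * (k - i)) + T (2 * (k - i) + 1)) :=
        sum_le_sum fun i hi ↦ by
          obtain ⟨hi1, hik⟩ := mem_Ico.mp hi
          exact ledouxTerm_le hq0 hq1 hi1 (by omega) (by omega) hkN
    _ ≤ 30 * √k * (q ^ ((1 : ℝ) / 4))⁻¹ * q⁻¹ ^ k * (3 * (1 + a) ^ (2 * k)) := by
        rw [← mul_sum]; gcongr; exact sum_Ico_binomTerm_neighbours_le k (by positivity)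
    _ = _ := by rw [div_pow, ← pow_mul]; ring
end
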